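/- (Complementarity on transitions) If two CCSKP transitions t1 and t2 are connected, then exactly one of t1 ι t2 and t1 ⊙ t2 holds. -/
import Mathlib


namespace CCSKP

/-- Action labels: names, co-names and τ. -/
inductive Act : Type where
  | name (a : ℕ)
  | coname (a : ℕ)
  | tau
deriving DecidableEq

/-- Complement of an action label. -/
def Act.bar : Act → Act
  | .name a => .coname a
  | .coname a => .name a
  | .tau => .tau

/-- Directions Left / Right. -/
inductive Dir : Type where
  | L
  | R
deriving DecidableEq

/-- The opposite direction. -/
def Dir.op : Dir → Dir
  | .L => .R
  | .R => .L

/-- Selection according to a direction. -/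
def Dir.sel {α : Type*} : Dir → α → α → α
  | .L, x, _ => x
  | .R, _, y => y

/-- Keys. -/
abbrev Key := ℕ

/-- CCSK processes. -/
inductive Proc : Type where
  | nil
  | pre (α : Act) (X : Proc)
  | res (X : Proc) (a : ℕ)
  | sum (X Y : Proc)
  | par (X Y : Proc)
  | keyed (α : Act) (k : Key) (X : Proc)
deriving DecidableEq

/-- The set of keys occurring in a process. -/
def Proc.keys : Proc → Finset Key
  | .nil => ∅
  | .pre _ X => X.keys
  | .res X _ => X.keys
  | .sum X Y => X.keys ∪ Y.keys
  | .par X Y => X.keys ∪ Y.keys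
  | .keyed _ k X => insert k X.keys

/-- Standard processes: no keys. -/
def Proc.Std (X : Proc) : Prop := X.keys = ∅

/-- Proof keyed labels. -/
inductive PLab : Type where
  | act (α : Act) (k : Key)
  | par (d : Dir) (θ : PLab)
  | sum (d : Dir) (θ : PLab)
  | syn (θL θR : PLab)
deriving DecidableEq

/-- The action ℓ(θ) of a proof keyed label. -/
def PLab.lab : PLab → Act
  | .act α _ => α
  | .par _ θ => θ.lab
  | .sum _ θ => θ.lab
  | .syn _ _ => .tau

/-- The key of a proof keyed label. -/
def PLab.key : PLab → Key
  | .act _ k => k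
  | .par _ θ => θ.key
  | .sum _ θ => θ.key
  | .syn θL _ => θL.key

/-- θ is of the form υ α[k] (no synchronisation pair). -/
def PLab.IsPre : PLab → Prop
  | .act _ _ => True
  | .par _ θ => θ.IsPre
  | .sum _ θ => θ.IsPre
  | .syn _ _ => False

/-- Forward transitions of CCSKP. -/
inductive Fwd : Proc → PLab → Proc → Prop where
  | act {α : Act} {X : Proc} {k : Key} :
      X.keys = ∅ → Fwd (.pre α X) (.act α k) (.keyed α k X)
  | pre {X X' : Proc} {θ : PLab} {α : Act} {k : Key} :
      Fwd X θ X' → θ.key ≠ k → Fwd (.keyed α k X) θ (.keyed α k X')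
  | res {X X' : Proc} {θ : PLab} {a : ℕ} :
      Fwd X θ X' → θ.lab ≠ .name a → θ.lab ≠ .coname a →
      Fwd (.res X a) θ (.res X' a)
  | parL {X X' Y : Proc} {θ : PLab} :
      Fwd X θ X' → θ.key ∉ Y.keys → Fwd (.par X Y) (.par .L θ) (.par X' Y)
  | parR {X Y Y' : Proc} {θ : PLab} :
      Fwd Y θ Y' → θ.key ∉ X.keys → Fwd (.par X Y) (.par .R θ) (.par X Y')
  | syn {X X' Y Y' : Proc} {θ1 θ2 : PLab} :
      Fwd X θ1 X' → Fwd Y θ2 Y' → θ1.IsPre → θ2.IsPre → θ1.lab ≠ .tau →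
      θ2.lab = θ1.lab.bar → θ2.key = θ1.key →
      Fwd (.par X Y) (.syn θ1 θ2) (.par X' Y')
  | sumL {X X' Y : Proc} {θ : PLab} :
      Fwd X θ X' → Y.keys = ∅ → Fwd (.sum X Y) (.sum .L θ) (.sum X' Y)
  | sumR {X Y Y' : Proc} {θ : PLab} :
      Fwd Y θ Y' → X.keys = ∅ → Fwd (.sum X Y) (.sum .R θ) (.sum X Y')

/-- Backward transitions of CCSKP: the exactly symmetric rules. -/
inductive Bwd : Proc → PLab → Proc → Prop where
  | act {α : Act} {X : Proc} {k : Key} :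
      X.keys = ∅ → Bwd (.keyed α k X) (.act α k) (.pre α X)
  | pre {X' X : Proc} {θ : PLab} {α : Act} {k : Key} :
      Bwd X' θ X → θ.key ≠ k → Bwd (.keyed α k X') θ (.keyed α k X)
  | res {X' X : Proc} {θ : PLab} {a : ℕ} :
      Bwd X' θ X → θ.lab ≠ .name a → θ.lab ≠ .coname a →
      Bwd (.res X' a) θ (.res X a)
  | parL {X' X Y : Proc} {θ : PLab} :
      Bwd X' θ X → θ.key ∉ Y.keys → Bwd (.par X' Y) (.par .L θ) (.par X Y)
  | parR {X Y' Y : Proc} {θ : PLab} :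
      Bwd Y' θ Y → θ.key ∉ X.keys → Bwd (.par X Y') (.par .R θ) (.par X Y)
  | syn {X' X Y' Y : Proc} {θ1 θ2 : PLab} :
      Bwd X' θ1 X → Bwd Y' θ2 Y → θ1.IsPre → θ2.IsPre → θ1.lab ≠ .tau →
      θ2.lab = θ1.lab.bar → θ2.key = θ1.key →
      Bwd (.par X' Y') (.syn θ1 θ2) (.par X Y)
  | sumL {X' X Y : Proc} {θ : PLab} :
      Bwd X' θ X → Y.keys = ∅ → Bwd (.sum X' Y) (.sum .L θ) (.sum X Y)
  | sumR {X Y' Y : Proc} {θ : PLab} :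
      Bwd Y' θ Y → X.keys = ∅ → Bwd (.sum X Y') (.sum .R θ) (.sum X Y)

/-- A combined step: forward if `d = true`, backward if `d = false`. -/
def Step (X : Proc) (d : Bool) (θ : PLab) (Y : Proc) : Prop :=
  if d then Fwd X θ Y else Bwd X θ Y

/-- Transitions of CCSKP (forward or backward). -/
structure Tr : Type where
  src : Proc
  fwd? : Bool
  lbl : PLab
  tgt : Proc
deriving DecidableEq

/-- A transition is valid if it is derivable in the LTS. -/
def Tr.Valid (t : Tr) : Prop := Step t.src t.fwd? t.lbl t.tgt

/-- The reverse of a transition. -/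
def Tr.rev (t : Tr) : Tr := ⟨t.tgt, !t.fwd?, t.lbl, t.src⟩

/-- The key of a transition. -/
def Tr.key (t : Tr) : Key := t.lbl.key

/-- Existence of a path between two processes. -/
inductive Reach : Proc → Proc → Prop where
  | refl (X : Proc) : Reach X X
  | step {X Y Z : Proc} {d : Bool} {θ : PLab} :
      Step X d θ Y → Reach Y Z → Reach X Z

/-- t is connected to u: there is a path from the source of t to the target of u. -/
def Tr.ConnectedTo (t u : Tr) : Prop := Reach t.src u.tgt

/-- t and u are connected. -/
def Tr.Connected (t u : Tr) : Prop := t.ConnectedTo u ∨ u.ConnectedTo t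

/-- X cannot perform a backward transition. -/
def Rooted (X : Proc) : Prop := ∀ (θ : PLab) (Y : Proc), ¬ Bwd X θ Y

/-- Reachable processes: target of a rooted path from a standard origin. -/
def Reachable (X : Proc) : Prop := ∃ O : Proc, O.Std ∧ Rooted O ∧ Reach O X

/-- The connectivity relation ⌢ on proof keyed labels. -/
inductive Conn : PLab → PLab → Prop where
  | a1 {α : Act} {k : Key} {θ : PLab} : Conn (.act α k) θ
  | a2 {θ : PLab} {α : Act} {k : Key} :
      (∀ (β : Act) (k' : Key), θ ≠ .act β k') → Conn θ (.act α k)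
  | c1 {d : Dir} {θ θ' : PLab} : Conn θ θ' → Conn (.sum d θ) (.sum d θ')
  | c2 {d : Dir} {θ θ' : PLab} : Conn (.sum d θ) (.sum d.op θ')
  | p1 {d : Dir} {θ θ' : PLab} : Conn θ θ' → Conn (.par d θ) (.par d θ')
  | p2 {d : Dir} {θ θ' : PLab} : Conn (.par d θ) (.par d.op θ')
  | s1 {d : Dir} {θ θL θR : PLab} : Conn θ (d.sel θL θR) → Conn (.par d θ) (.syn θL θR)
  | s2 {d : Dir} {θ θL θR : PLab} : Conn (d.sel θL θR) θ → Conn (.syn θL θR) (.par d θ)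
  | s3 {θ1 θ2 θ1' θ2' : PLab} : Conn θ1 θ1' → Conn θ2 θ2' → Conn (.syn θ1 θ2) (.syn θ1' θ2')

/-- The dependence relation ⊙ on proof keyed labels. -/
inductive Dep : PLab → PLab → Prop where
  | a1 {α : Act} {k : Key} {θ : PLab} : Dep (.act α k) θ
  | a2 {θ : PLab} {α : Act} {k : Key} :
      (∀ (β : Act) (k' : Key), θ ≠ .act β k') → Dep θ (.act α k)
  | c1 {d : Dir} {θ θ' : PLab} : Dep θ θ' → Dep (.sum d θ) (.sum d θ')
  | c2 {d : Dir} {θ θ' : PLab} : Dep (.sum d θ) (.sum d.op θ')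
  | p1 {d : Dir} {θ θ' : PLab} : Dep θ θ' → Dep (.par d θ) (.par d θ')
  | p2k {d : Dir} {θ θ' : PLab} : θ.key = θ'.key → Dep (.par d θ) (.par d.op θ')
  | s1 {d : Dir} {θ θL θR : PLab} : Dep θ (d.sel θL θR) → Dep (.par d θ) (.syn θL θR)
  | s2 {d : Dir} {θ θL θR : PLab} : Dep (d.sel θL θR) θ → Dep (.syn θL θR) (.par d θ)
  | s3a {θ1 θ2 θ1' θ2' : PLab} : Dep θ1 θ1' → Conn θ2 θ2' → Dep (.syn θ1 θ2) (.syn θ1' θ2')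
  | s3b {θ1 θ2 θ1' θ2' : PLab} : Conn θ1 θ1' → Dep θ2 θ2' → Dep (.syn θ1 θ2) (.syn θ1' θ2')

/-- The independence relation ι on proof keyed labels. -/
inductive Ind : PLab → PLab → Prop where
  | c1 {d : Dir} {θ θ' : PLab} : Ind θ θ' → Ind (.sum d θ) (.sum d θ')
  | p1 {d : Dir} {θ θ' : PLab} : Ind θ θ' → Ind (.par d θ) (.par d θ')
  | p2k {d : Dir} {θ θ' : PLab} : θ.key ≠ θ'.key → Ind (.par d θ) (.par d.op θ')
  | s1 {d : Dir} {θ θL θR : PLab} : Ind θ (d.sel θL θR) → Ind (.par d θ) (.syn θL θR)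
  | s2 {d : Dir} {θ θL θR : PLab} : Ind (d.sel θL θR) θ → Ind (.syn θL θR) (.par d θ)
  | s3 {θ1 θ2 θ1' θ2' : PLab} : Ind θ1 θ1' → Ind θ2 θ2' → Ind (.syn θ1 θ2) (.syn θ1' θ2')

/-- Independence of transitions: connected transitions with independent labels. -/
def Tr.ind (t u : Tr) : Prop := t.Valid ∧ u.Valid ∧ t.Connected u ∧ Ind t.lbl u.lbl

/-- Dependence of transitions: connected transitions with dependent labels. -/
def Tr.dep (t u : Tr) : Prop := t.Valid ∧ u.Valid ∧ t.Connected u ∧ Dep t.lbl u.lbl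

end CCSKP

namespace CCSKP

/-- Generous over-approximation of the labels a process can emit. -/
inductive LO : Proc → PLab → Prop where
  | preAct {α β : Act} {X : Proc} {k : Key} : LO (.pre α X) (.act β k)
  | preIn {α : Act} {X : Proc} {θ : PLab} : LO X θ → LO (.pre α X) θ
  | keyAct {α β : Act} {X : Proc} {k k' : Key} : LO (.keyed α k X) (.act β k')
  | keyIn {α : Act} {X : Proc} {k : Key} {θ : PLab} : LO X θ → LO (.keyed α k X) θ
  | res {X : Proc} {a : ℕ} {θ : PLab} : LO X θ → LO (.res X a) θ
  | sumL {X Y : Proc} {θ : PLab} : LO X θ → LO (.sum X Y) (.sum .L θ)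
  | sumR {X Y : Proc} {θ : PLab} : LO Y θ → LO (.sum X Y) (.sum .R θ)
  | parL {X Y : Proc} {θ : PLab} : LO X θ → LO (.par X Y) (.par .L θ)
  | parR {X Y : Proc} {θ : PLab} : LO Y θ → LO (.par X Y) (.par .R θ)
  | syn {X Y : Proc} {θ1 θ2 : PLab} : LO X θ1 → LO Y θ2 → LO (.par X Y) (.syn θ1 θ2)

lemma fwd_lo {X Y : Proc} {θ : PLab} (h : Fwd X θ Y) : LO X θ ∧ LO Y θ := by
  induction h with
  | act _ => exact ⟨.preAct, .keyAct⟩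
  | pre _ _ ih => exact ⟨.keyIn ih.1, .keyIn ih.2⟩
  | res _ _ _ ih => exact ⟨.res ih.1, .res ih.2⟩
  | parL _ _ ih => exact ⟨.parL ih.1, .parL ih.2⟩
  | parR _ _ ih => exact ⟨.parR ih.1, .parR ih.2⟩
  | syn _ _ _ _ _ _ _ ih1 ih2 => exact ⟨.syn ih1.1 ih2.1, .syn ih1.2 ih2.2⟩
  | sumL _ _ ih => exact ⟨.sumL ih.1, .sumL ih.2⟩
  | sumR _ _ ih => exact ⟨.sumR ih.1, .sumR ih.2⟩

lemma bwd_lo {X Y : Proc} {θ : PLab} (h : Bwd X θ Y) : LO X θ ∧ LO Y θ := by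
  induction h with
  | act _ => exact ⟨.keyAct, .preAct⟩
  | pre _ _ ih => exact ⟨.keyIn ih.1, .keyIn ih.2⟩
  | res _ _ _ ih => exact ⟨.res ih.1, .res ih.2⟩
  | parL _ _ ih => exact ⟨.parL ih.1, .parL ih.2⟩
  | parR _ _ ih => exact ⟨.parR ih.1, .parR ih.2⟩
  | syn _ _ _ _ _ _ _ ih1 ih2 => exact ⟨.syn ih1.1 ih2.1, .syn ih1.2 ih2.2⟩
  | sumL _ _ ih => exact ⟨.sumL ih.1, .sumL ih.2⟩
  | sumR _ _ ih => exact ⟨.sumR ih.1, .sumR ih.2⟩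

lemma fwd_lo_back {X Y : Proc} {θ : PLab} (h : Fwd X θ Y) :
    ∀ θ', LO Y θ' → LO X θ' := by
  induction h with
  | act _ =>
    intro θ' h'
    cases h' with
    | keyAct => exact .preAct
    | keyIn h'' => exact .preIn h''
  | pre _ _ ih =>
    intro θ' h'
    cases h' with
    | keyAct => exact .keyAct
    | keyIn h'' => exact .keyIn (ih _ h'')
  | res _ _ _ ih =>
    intro θ' h'
    cases h' with | res h'' => exact .res (ih _ h'')
  | parL _ _ ih =>
    intro θ' h'
    cases h' with
    | parL h'' => exact .parL (ih _ h'')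
    | parR h'' => exact .parR h''
    | syn ha hb => exact .syn (ih _ ha) hb
  | parR _ _ ih =>
    intro θ' h'
    cases h' with
    | parL h'' => exact .parL h''
    | parR h'' => exact .parR (ih _ h'')
    | syn ha hb => exact .syn ha (ih _ hb)
  | syn _ _ _ _ _ _ _ ih1 ih2 =>
    intro θ' h'
    cases h' with
    | parL h'' => exact .parL (ih1 _ h'')
    | parR h'' => exact .parR (ih2 _ h'')
    | syn ha hb => exact .syn (ih1 _ ha) (ih2 _ hb)
  | sumL _ _ ih =>
    intro θ' h'
    cases h' with
    | sumL h'' => exact .sumL (ih _ h'')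
    | sumR h'' => exact .sumR h''
  | sumR _ _ ih =>
    intro θ' h'
    cases h' with
    | sumL h'' => exact .sumL h''
    | sumR h'' => exact .sumR (ih _ h'')

lemma bwd_lo_back {X Y : Proc} {θ : PLab} (h : Bwd X θ Y) :
    ∀ θ', LO Y θ' → LO X θ' := by
  induction h with
  | act _ =>
    intro θ' h'
    cases h' with
    | preAct => exact .keyAct
    | preIn h'' => exact .keyIn h''
  | pre _ _ ih =>
    intro θ' h'
    cases h' with
    | keyAct => exact .keyAct
    | keyIn h'' => exact .keyIn (ih _ h'')
  | res _ _ _ ih =>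
    intro θ' h'
    cases h' with | res h'' => exact .res (ih _ h'')
  | parL _ _ ih =>
    intro θ' h'
    cases h' with
    | parL h'' => exact .parL (ih _ h'')
    | parR h'' => exact .parR h''
    | syn ha hb => exact .syn (ih _ ha) hb
  | parR _ _ ih =>
    intro θ' h'
    cases h' with
    | parL h'' => exact .parL h''
    | parR h'' => exact .parR (ih _ h'')
    | syn ha hb => exact .syn ha (ih _ hb)
  | syn _ _ _ _ _ _ _ ih1 ih2 =>
    intro θ' h'
    cases h' with
    | parL h'' => exact .parL (ih1 _ h'')
    | parR h'' => exact .parR (ih2 _ h'')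
    | syn ha hb => exact .syn (ih1 _ ha) (ih2 _ hb)
  | sumL _ _ ih =>
    intro θ' h'
    cases h' with
    | sumL h'' => exact .sumL (ih _ h'')
    | sumR h'' => exact .sumR h''
  | sumR _ _ ih =>
    intro θ' h'
    cases h' with
    | sumL h'' => exact .sumL h''
    | sumR h'' => exact .sumR (ih _ h'')

lemma step_lo {X Y : Proc} {d : Bool} {θ : PLab} (h : Step X d θ Y) :
    LO X θ ∧ LO Y θ := by
  cases d
  · exact bwd_lo h
  · exact fwd_lo h

lemma step_lo_back {X Y : Proc} {d : Bool} {θ : PLab} (h : Step X d θ Y) :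
    ∀ θ', LO Y θ' → LO X θ' := by
  cases d
  · exact bwd_lo_back h
  · exact fwd_lo_back h

lemma reach_lo {X Z : Proc} (h : Reach X Z) : ∀ θ, LO Z θ → LO X θ := by
  induction h with
  | refl _ => exact fun _ h => h
  | step hs _ ih => exact fun θ hθ => step_lo_back hs θ (ih θ hθ)

lemma conn_act (θ : PLab) (α : Act) (k : Key) : Conn θ (.act α k) := by
  cases θ with
  | act β k' => exact .a1
  | par d θ => exact .a2 (fun β k' h => by cases h)
  | sum d θ => exact .a2 (fun β k' h => by cases h)
  | syn θ1 θ2 => exact .a2 (fun β k' h => by cases h)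

lemma lo_conn {X : Proc} {θ1 : PLab} (h1 : LO X θ1) :
    ∀ θ2, LO X θ2 → Conn θ1 θ2 := by
  induction h1 with
  | preAct => exact fun _ _ => .a1
  | keyAct => exact fun _ _ => .a1
  | preIn h ih =>
    intro θ2 h2
    cases h2 with
    | preAct => exact conn_act _ _ _
    | preIn h' => exact ih _ h'
  | keyIn h ih =>
    intro θ2 h2
    cases h2 with
    | keyAct => exact conn_act _ _ _
    | keyIn h' => exact ih _ h'
  | res h ih =>
    intro θ2 h2
    cases h2 with | res h' => exact ih _ h'
  | sumL h ih =>
    intro θ2 h2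
    cases h2 with
    | sumL h' => exact .c1 (ih _ h')
    | sumR h' => exact .c2 (d := .L)
  | sumR h ih =>
    intro θ2 h2
    cases h2 with
    | sumL h' => exact .c2 (d := .R)
    | sumR h' => exact .c1 (ih _ h')
  | parL h ih =>
    intro θ2 h2
    cases h2 with
    | parL h' => exact .p1 (ih _ h')
    | parR h' => exact .p2 (d := .L)
    | syn ha hb => exact .s1 (d := .L) (ih _ ha)
  | parR h ih =>
    intro θ2 h2
    cases h2 with
    | parL h' => exact .p2 (d := .R)
    | parR h' => exact .p1 (ih _ h')
    | syn ha hb => exact .s1 (d := .R) (ih _ hb)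
  | syn ha hb iha ihb =>
    intro θ2 h2
    cases h2 with
    | parL h' => exact .s2 (d := .L) (iha _ h')
    | parR h' => exact .s2 (d := .R) (ihb _ h')
    | syn ha' hb' => exact .s3 (iha _ ha') (ihb _ hb')

lemma conn_symm {θ θ' : PLab} (h : Conn θ θ') : Conn θ' θ := by
  induction h with
  | a1 => exact conn_act _ _ _
  | a2 _ => exact .a1
  | c1 _ ih => exact .c1 ih
  | c2 =>
    rename_i d _ _
    cases d
    · exact Conn.c2 (d := .R)
    · exact Conn.c2 (d := .L)
  | p1 _ ih => exact .p1 ih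
  | p2 =>
    rename_i d _ _
    cases d
    · exact Conn.p2 (d := .R)
    · exact Conn.p2 (d := .L)
  | s1 _ ih => exact .s2 ih
  | s2 _ ih => exact .s1 ih
  | s3 _ _ ih1 ih2 => exact .s3 ih1 ih2

lemma dir_op_ne (d : Dir) : d.op ≠ d := by cases d <;> simp [Dir.op]

lemma dep_sum_inv {d d' : Dir} {θ θ' : PLab} (h : Dep (.sum d θ) (.sum d' θ')) :
    (d' = d ∧ Dep θ θ') ∨ d' = d.op := by
  cases h with
  | c1 h => exact Or.inl ⟨rfl, h⟩
  | c2 => exact Or.inr rfl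

lemma dep_par_inv {d d' : Dir} {θ θ' : PLab} (h : Dep (.par d θ) (.par d' θ')) :
    (d' = d ∧ Dep θ θ') ∨ (d' = d.op ∧ θ.key = θ'.key) := by
  cases h with
  | p1 h => exact Or.inl ⟨rfl, h⟩
  | p2k h => exact Or.inr ⟨rfl, h⟩

lemma ind_dep_false {θ θ' : PLab} (hI : Ind θ θ') (hD : Dep θ θ') : False := by
  induction hI with
  | c1 _ ih =>
    rcases dep_sum_inv hD with ⟨_, h⟩ | h
    · exact ih h
    · exact dir_op_ne _ h.symm
  | p1 _ ih =>
    rcases dep_par_inv hD with ⟨_, h⟩ | ⟨h, _⟩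
    · exact ih h
    · exact dir_op_ne _ h.symm
  | p2k hne =>
    rcases dep_par_inv hD with ⟨h, _⟩ | ⟨_, h⟩
    · exact dir_op_ne _ h
    · exact hne h
  | s1 _ ih =>
    cases hD with
    | s1 h => exact ih h
  | s2 _ ih =>
    cases hD with
    | s2 h => exact ih h
  | s3 _ _ ih1 ih2 =>
    cases hD with
    | s3a h _ => exact ih1 h
    | s3b _ h => exact ih2 h

lemma conn_ind_or_dep {θ θ' : PLab} (h : Conn θ θ') : Ind θ θ' ∨ Dep θ θ' := by
  induction h with
  | a1 => exact Or.inr .a1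
  | a2 hne => exact Or.inr (.a2 hne)
  | c1 _ ih =>
    rcases ih with hI | hD
    · exact Or.inl (.c1 hI)
    · exact Or.inr (.c1 hD)
  | c2 => exact Or.inr .c2
  | p1 _ ih =>
    rcases ih with hI | hD
    · exact Or.inl (.p1 hI)
    · exact Or.inr (.p1 hD)
  | p2 =>
    rename_i d θ1 θ2
    by_cases hk : θ1.key = θ2.key
    · exact Or.inr (.p2k hk)
    · exact Or.inl (.p2k hk)
  | s1 _ ih =>
    rcases ih with hI | hD
    · exact Or.inl (.s1 hI)
    · exact Or.inr (.s1 hD)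
  | s2 _ ih =>
    rcases ih with hI | hD
    · exact Or.inl (.s2 hI)
    · exact Or.inr (.s2 hD)
  | s3 h1 h2 ih1 ih2 =>
    rcases ih1 with hI1 | hD1
    · rcases ih2 with hI2 | hD2
      · exact Or.inl (.s3 hI1 hI2)
      · exact Or.inr (.s3b h1 hD2)
    · exact Or.inr (.s3a hD1 h2)

lemma connected_conn {t1 t2 : Tr} (h1 : t1.Valid) (h2 : t2.Valid)
    (hc : t1.Connected t2) : Conn t1.lbl t2.lbl := by
  rcases hc with hr | hr
  · have l1 : LO t1.src t1.lbl := (step_lo h1).1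
    have l2 : LO t2.tgt t2.lbl := (step_lo h2).2
    exact lo_conn l1 _ (reach_lo hr _ l2)
  · have l2 : LO t2.src t2.lbl := (step_lo h2).1
    have l1 : LO t1.tgt t1.lbl := (step_lo h1).2
    exact conn_symm (lo_conn l2 _ (reach_lo hr _ l1))

/-- **Complementarity on transitions.** If two CCSKP transitions are connected then
exactly one of `t1 ι t2` and `t1 ⊙ t2` holds. -/
theorem complementarity_on_transitions (t1 t2 : Tr)
    (h1 : t1.Valid) (h2 : t2.Valid) (hc : t1.Connected t2) :
    (t1.ind t2 ∨ t1.dep t2) ∧ ¬ (t1.ind t2 ∧ t1.dep t2) := by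
  have hconn := connected_conn h1 h2 hc
  constructor
  · rcases conn_ind_or_dep hconn with hI | hD
    · exact Or.inl ⟨h1, h2, hc, hI⟩
    · exact Or.inr ⟨h1, h2, hc, hD⟩
  · rintro ⟨⟨_, _, _, hI⟩, ⟨_, _, _, hD⟩⟩
    exact ind_dep_false hI hD

end CCSKP
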